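/- arXiv:1810.10702 — 3 statements merged into one kernel-verified Lean document; each statement's English description precedes it below -/
import Mathlib

section
/- For vectors u, v in ℝ^n (n ≥ 2) with angle(u, v) ≤ π/2, the angle between u and v is at most the sum over all 2-element subsets Ω of [n] of the angles between the restricted subvectors u_Ω and v_Ω (with the convention that the angle involving a zero vector is 0). -/
/-! Write `G(x, y) = ‖x‖²‖y‖² - ⟨x, y⟩²` for the Gram determinant and `θ = angle(u, v)`,
`θ_Ω = angle(u_Ω, v_Ω)`. Then `G(u, v) = ‖u‖²‖v‖² sin² θ`, and Lagrange's identity splits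
`G(u, v)` into the Gram determinants of the two-dimensional subvectors; since `‖u_Ω‖ ≤ ‖u‖`,
this gives `sin² θ ≤ ∑ sin² θ_Ω`. On `[0, π/2]` the function `sin²` is superadditive,
because `sin² (a + b) - sin² a - sin² b = 2 sin a sin b cos (a + b)`. Hence if
`S = ∑ θ_Ω ≤ π/2` then `sin² θ ≤ sin² S` and so `θ ≤ S`; otherwise `θ ≤ π/2 < S`. -/

open Finset

/-- Angle between two vectors in ℝ^k, with the convention that the angle
    involving a zero vector is 0. -/
noncomputable def ang {k : ℕ} (x y : Fin k → ℝ) : ℝ :=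
  if x = 0 ∨ y = 0 then 0
  else Real.arccos ((∑ i, x i * y i) /
    (Real.sqrt (∑ i, x i ^ 2) * Real.sqrt (∑ i, y i ^ 2)))

/-- The restriction of a vector to a subset of coordinates (zero elsewhere). -/
def restrict {k : ℕ} (x : Fin k → ℝ) (Ω : Finset (Fin k)) : Fin k → ℝ :=
  fun i => if i ∈ Ω then x i else 0

open Real

section Gram

variable {ι : Type*}

def gramDet (s : Finset ι) (x y : ι → ℝ) : ℝ :=
  (∑ i ∈ s, x i ^ 2) * (∑ i ∈ s, y i ^ 2) - (∑ i ∈ s, x i * y i) ^ 2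

variable [DecidableEq ι]

lemma gramDet_insert {a : ι} {s : Finset ι} (ha : a ∉ s) (x y : ι → ℝ) :
    gramDet (insert a s) x y = gramDet s x y + ∑ j ∈ s, (x a * y j - x j * y a) ^ 2 := by
  have hsq : ∑ j ∈ s, (x a * y j - x j * y a) ^ 2 =
      x a ^ 2 * ∑ j ∈ s, y j ^ 2 + y a ^ 2 * ∑ j ∈ s, x j ^ 2
        - 2 * (x a * y a) * ∑ j ∈ s, x j * y j := by
    simp only [mul_sum, ← sum_add_distrib, ← sum_sub_distrib]
    exact sum_congr rfl fun j _ => by ring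
  rw [gramDet, gramDet, sum_insert ha, sum_insert ha, sum_insert ha, hsq]
  ring

lemma gramDet_pair {a b : ι} (hab : a ≠ b) (x y : ι → ℝ) :
    gramDet {a, b} x y = (x a * y b - x b * y a) ^ 2 := by
  rw [gramDet_insert (notMem_singleton.2 hab), sum_singleton, gramDet]
  simp only [sum_singleton]
  ring

lemma gramDet_eq_sum_powersetCard_two (s : Finset ι) (x y : ι → ℝ) :
    gramDet s x y = ∑ Ω ∈ s.powersetCard 2, gramDet Ω x y := by
  induction s using Finset.induction_on with
  | empty => simp [gramDet, powersetCard_eq_empty.2 (card_empty.trans_lt two_pos)]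
  | insert a s ha ih =>
    have hdisj : Disjoint (s.powersetCard 2) ((s.powersetCard 1).image (insert a)) := by
      simp only [disjoint_left, mem_powersetCard, mem_image]
      rintro _ ⟨hΩs, -⟩ ⟨t, -, rfl⟩
      exact ha (hΩs (mem_insert_self a t))
    rw [powersetCard_succ_insert ha, sum_union hdisj, sum_image, powersetCard_one, sum_map,
      gramDet_insert ha, ih]
    · congr 1
      refine sum_congr rfl fun j hj => ?_
      simp only [Function.Embedding.coeFn_mk]
      rw [gramDet_pair (ne_of_mem_of_not_mem hj ha).symm]
    · intro t ht t' ht' htt'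
      have hat : a ∉ t := fun h => ha ((mem_powersetCard.1 ht).1 h)
      have hat' : a ∉ t' := fun h => ha ((mem_powersetCard.1 ht').1 h)
      rw [← erase_insert hat, ← erase_insert hat']
      exact congrArg (erase · a) htt'

end Gram

lemma ang_nonneg {k : ℕ} (x y : Fin k → ℝ) : 0 ≤ ang x y := by
  unfold ang
  split_ifs
  exacts [le_rfl, arccos_nonneg _]

lemma sum_sq_eq_zero_iff {k : ℕ} {x : Fin k → ℝ} : ∑ i, x i ^ 2 = 0 ↔ x = 0 := by
  rw [Fintype.sum_eq_zero_iff_of_nonneg fun i => sq_nonneg (x i)]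
  simp [funext_iff]

lemma sum_sq_mul_sum_sq_mul_sin_sq_ang {k : ℕ} (x y : Fin k → ℝ) :
    (∑ i, x i ^ 2) * (∑ i, y i ^ 2) * sin (ang x y) ^ 2 = gramDet univ x y := by
  unfold ang gramDet
  split_ifs with h
  · rcases h with rfl | rfl <;> simp
  · rw [not_or] at h
    have hA : ∑ i, x i ^ 2 ≠ 0 := sum_sq_eq_zero_iff.not.2 h.1
    have hB : ∑ i, y i ^ 2 ≠ 0 := sum_sq_eq_zero_iff.not.2 h.2
    have hcos_sq : ((∑ i, x i * y i) / (√(∑ i, x i ^ 2) * √(∑ i, y i ^ 2))) ^ 2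
        = (∑ i, x i * y i) ^ 2 / ((∑ i, x i ^ 2) * ∑ i, y i ^ 2) := by
      rw [div_pow, mul_pow, sq_sqrt (sum_nonneg fun i _ => sq_nonneg _),
        sq_sqrt (sum_nonneg fun i _ => sq_nonneg _)]
    have hcs : (∑ i, x i * y i) ^ 2 / ((∑ i, x i ^ 2) * ∑ i, y i ^ 2) ≤ 1 :=
      div_le_one_of_le₀ (sum_mul_sq_le_sq_mul_sq _ _ _)
        (mul_nonneg (sum_nonneg fun i _ => sq_nonneg _) (sum_nonneg fun i _ => sq_nonneg _))
    rw [sin_arccos, sq_sqrt (by linarith), hcos_sq]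
    field_simp

lemma sum_restrict_mul {k : ℕ} (x y : Fin k → ℝ) (Ω : Finset (Fin k)) :
    ∑ i, restrict x Ω i * restrict y Ω i = ∑ i ∈ Ω, x i * y i := by
  simp only [_root_.restrict, ite_mul, zero_mul, mul_ite, mul_zero, sum_ite_mem, univ_inter,
    inter_self]

lemma gramDet_univ_restrict {k : ℕ} (x y : Fin k → ℝ) (Ω : Finset (Fin k)) :
    gramDet univ (restrict x Ω) (restrict y Ω) = gramDet Ω x y := by
  simp only [gramDet, sq, sum_restrict_mul]

lemma sum_sq_restrict_le {k : ℕ} (x : Fin k → ℝ) (Ω : Finset (Fin k)) :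
    ∑ i, restrict x Ω i ^ 2 ≤ ∑ i, x i ^ 2 :=
  sum_le_sum fun i _ => by
    unfold _root_.restrict
    split_ifs
    exacts [le_rfl, by simpa using sq_nonneg (x i)]

lemma sin_sq_ang_le_sum_sin_sq_ang_restrict {n : ℕ} (u v : Fin n → ℝ) :
    sin (ang u v) ^ 2 ≤
      ∑ Ω ∈ powersetCard 2 univ, sin (ang (restrict u Ω) (restrict v Ω)) ^ 2 := by
  by_cases h : u = 0 ∨ v = 0
  · rw [ang, if_pos h, sin_zero, sq, zero_mul]
    positivity
  rw [not_or, ← sum_sq_eq_zero_iff.not, ← sum_sq_eq_zero_iff.not] at h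
  set P := (∑ i, u i ^ 2) * ∑ i, v i ^ 2 with hP_def
  have hP : 0 < P := mul_pos ((sum_nonneg fun i _ => sq_nonneg _).lt_of_ne' h.1)
    ((sum_nonneg fun i _ => sq_nonneg _).lt_of_ne' h.2)
  refine le_of_mul_le_mul_left ?_ hP
  calc P * sin (ang u v) ^ 2 = ∑ Ω ∈ powersetCard 2 univ, gramDet Ω u v := by
        rw [hP_def, sum_sq_mul_sum_sq_mul_sin_sq_ang, gramDet_eq_sum_powersetCard_two]
    _ = ∑ Ω ∈ powersetCard 2 univ, (∑ i, restrict u Ω i ^ 2) * (∑ i, restrict v Ω i ^ 2) *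
          sin (ang (restrict u Ω) (restrict v Ω)) ^ 2 := by
        simp only [sum_sq_mul_sum_sq_mul_sin_sq_ang, gramDet_univ_restrict]
    _ ≤ ∑ Ω ∈ powersetCard 2 univ, P * sin (ang (restrict u Ω) (restrict v Ω)) ^ 2 := by
        refine sum_le_sum fun Ω _ => mul_le_mul_of_nonneg_right ?_ (sq_nonneg _)
        exact mul_le_mul (sum_sq_restrict_le u Ω) (sum_sq_restrict_le v Ω) (by positivity)
          (by positivity)
    _ = P * ∑ Ω ∈ powersetCard 2 univ, sin (ang (restrict u Ω) (restrict v Ω)) ^ 2 :=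
        (mul_sum _ _ _).symm

lemma sin_sq_add_sin_sq_le_sin_sq_add {a b : ℝ} (ha : 0 ≤ a) (hb : 0 ≤ b)
    (hab : a + b ≤ π / 2) : sin a ^ 2 + sin b ^ 2 ≤ sin (a + b) ^ 2 := by
  have hsa : 0 ≤ sin a := sin_nonneg_of_nonneg_of_le_pi ha (by linarith [pi_pos])
  have hsb : 0 ≤ sin b := sin_nonneg_of_nonneg_of_le_pi hb (by linarith [pi_pos])
  have hc : 0 ≤ cos (a + b) := cos_nonneg_of_mem_Icc ⟨by linarith [pi_pos], hab⟩
  have key : sin (a + b) ^ 2 - sin a ^ 2 - sin b ^ 2 = 2 * sin a * sin b * cos (a + b) := by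
    rw [sin_add, cos_add]
    linear_combination sin a ^ 2 * sin_sq_add_cos_sq b + sin b ^ 2 * sin_sq_add_cos_sq a
  nlinarith [mul_nonneg (mul_nonneg hsa hsb) hc]

lemma sum_sin_sq_le_sin_sq_sum {ι : Type*} {s : Finset ι} {f : ι → ℝ} (hf : ∀ i ∈ s, 0 ≤ f i)
    (hs : ∑ i ∈ s, f i ≤ π / 2) : ∑ i ∈ s, sin (f i) ^ 2 ≤ sin (∑ i ∈ s, f i) ^ 2 := by
  induction s using Finset.cons_induction with
  | empty => simp
  | cons a s ha ih =>
    rw [forall_mem_cons] at hf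
    rw [sum_cons] at hs
    rw [sum_cons, sum_cons]
    have hs_nonneg : 0 ≤ ∑ i ∈ s, f i := sum_nonneg hf.2
    calc sin (f a) ^ 2 + ∑ i ∈ s, sin (f i) ^ 2
        ≤ sin (f a) ^ 2 + sin (∑ i ∈ s, f i) ^ 2 := by gcongr; exact ih hf.2 (by linarith)
      _ ≤ sin (f a + ∑ i ∈ s, f i) ^ 2 := sin_sq_add_sin_sq_le_sin_sq_add hf.1 hs_nonneg hs

lemma le_of_sin_sq_le_sin_sq {a b : ℝ} (hb : 0 ≤ b) (ha : a ≤ π / 2)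
    (h : sin a ^ 2 ≤ sin b ^ 2) : a ≤ b := by
  by_contra! hba
  have hsin_lt : sin b < sin a :=
    sin_lt_sin_of_lt_of_le_pi_div_two (by linarith [pi_pos]) ha hba
  have hsin_nonneg : 0 ≤ sin b := sin_nonneg_of_nonneg_of_le_pi hb (by linarith [pi_pos])
  nlinarith

theorem stmt0_general (n : ℕ) (u v : Fin n → ℝ)
    (h : ang u v ≤ Real.pi / 2) :
    ang u v ≤ ∑ Ω ∈ Finset.powersetCard 2 (Finset.univ : Finset (Fin n)),
      ang (restrict u Ω) (restrict v Ω) := by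
  rcases le_or_gt (π / 2) (∑ Ω ∈ powersetCard 2 univ, ang (restrict u Ω) (restrict v Ω))
    with hS | hS
  · exact h.trans hS
  refine le_of_sin_sq_le_sin_sq (sum_nonneg fun Ω _ => ang_nonneg _ _) h ?_
  exact (sin_sq_ang_le_sum_sin_sq_ang_restrict u v).trans
    (sum_sin_sq_le_sin_sq_sum (fun Ω _ => ang_nonneg _ _) hS.le)

/-- Vector angle inequality: if angle(u,v) ≤ π/2 then the angle between u and v
    is at most the sum of the angles between all length-2 subvectors. -/
theorem stmt0 (n : ℕ) (hn : 2 ≤ n) (u v : Fin n → ℝ)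
    (h : ang u v ≤ Real.pi / 2) :
    ang u v ≤ ∑ Ω ∈ Finset.powersetCard 2 (Finset.univ : Finset (Fin n)),
      ang (restrict u Ω) (restrict v Ω) :=
  stmt0_general n u v h
end

section
/- Let (x₁, y₁), (x₂, y₂) be points in the open first quadrant of ℝ² with y₁ ≥ x₁, y₂ ≥ x₂, and 1 ≤ (y₂/x₂)/(y₁/x₁) ≤ 1 + η for some η ≤ 1. Then the angle between the vectors (x₁, y₁) and (x₂, y₂) is at most η. -/
lemma arccos_antitone : Antitone Real.arccos := fun a b h => by
  unfold Real.arccos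
  have := Real.monotone_arcsin h
  linarith

lemma poly_aux (u : ℝ) (hu0 : 0 ≤ u) (hu1 : u ≤ 1) :
    (1 - u / 2 + u ^ 2 * (5 / 96)) ^ 2 * (1 + u / 4) ≤ 1 := by
  nlinarith [mul_nonneg hu0 hu0, mul_nonneg (mul_nonneg hu0 hu0) hu0,
    mul_nonneg (mul_nonneg (mul_nonneg hu0 hu0) hu0) hu0,
    mul_nonneg (mul_nonneg (mul_nonneg (mul_nonneg hu0 hu0) hu0) hu0) hu0,
    mul_nonneg hu0 (sub_nonneg.2 hu1),
    mul_nonneg (mul_nonneg hu0 hu0) (sub_nonneg.2 hu1),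
    mul_nonneg (mul_nonneg (mul_nonneg hu0 hu0) hu0) (sub_nonneg.2 hu1),
    mul_nonneg (mul_nonneg (mul_nonneg (mul_nonneg hu0 hu0) hu0) hu0) (sub_nonneg.2 hu1)]

lemma cos_le_div (d c R η : ℝ) (hd : 0 < d) (hc : 0 ≤ c) (hR : 0 < R)
    (hRsq : R ^ 2 = d ^ 2 + c ^ 2) (hη0 : 0 ≤ η) (hη1 : η ≤ 1)
    (hkey : 2 * c ≤ η * d) : Real.cos η ≤ d / R := by
  have hη2 : η ^ 2 ≤ 1 := by nlinarith
  have hη4 : 0 ≤ η ^ 4 := by positivity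
  -- upper bound on cos η
  have hcos : Real.cos η ≤ 1 - η ^ 2 / 2 + η ^ 4 * (5 / 96) := by
    have hb := Real.cos_bound (x := η) (by rw [abs_of_nonneg hη0]; exact hη1)
    rw [abs_of_nonneg hη0] at hb
    have := (abs_le.1 hb).2
    linarith
  have hL0 : 0 ≤ 1 - η ^ 2 / 2 + η ^ 4 * (5 / 96) := by linarith
  -- key quadratic estimate
  have hc2 : c ^ 2 ≤ η ^ 2 / 4 * d ^ 2 := by nlinarith
  have hpoly := poly_aux (η ^ 2) (by positivity) hη2
  have hη4e : (η ^ 2) ^ 2 = η ^ 4 := by ring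
  rw [hη4e] at hpoly
  have hLsq : (1 - η ^ 2 / 2 + η ^ 4 * (5 / 96)) ^ 2 * (d ^ 2 + c ^ 2) ≤ d ^ 2 := by
    have h1 : (1 - η ^ 2 / 2 + η ^ 4 * (5 / 96)) ^ 2 * (d ^ 2 + c ^ 2)
        ≤ (1 - η ^ 2 / 2 + η ^ 4 * (5 / 96)) ^ 2 * ((1 + η ^ 2 / 4) * d ^ 2) := by
      apply mul_le_mul_of_nonneg_left _ (sq_nonneg _)
      nlinarith
    have h2 : (1 - η ^ 2 / 2 + η ^ 4 * (5 / 96)) ^ 2 * ((1 + η ^ 2 / 4) * d ^ 2) ≤ d ^ 2 := by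
      nlinarith [sq_nonneg d]
    linarith
  have hLd : (1 - η ^ 2 / 2 + η ^ 4 * (5 / 96)) * R ≤ d := by
    nlinarith [mul_nonneg hL0 hR.le]
  rw [le_div_iff₀ hR]
  calc Real.cos η * R ≤ (1 - η ^ 2 / 2 + η ^ 4 * (5 / 96)) * R :=
        mul_le_mul_of_nonneg_right hcos hR.le
    _ ≤ d := hLd

/-- Two points in the open first quadrant above the diagonal whose slope ratio
    is in [1, 1+η] (η ≤ 1) make an angle at most η. -/
theorem stmt3 (x₁ y₁ x₂ y₂ η : ℝ) (hx₁ : 0 < x₁) (hy₁ : 0 < y₁)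
    (hx₂ : 0 < x₂) (hy₂ : 0 < y₂) (h₁ : x₁ ≤ y₁) (h₂ : x₂ ≤ y₂)
    (hη : η ≤ 1) (hlo : 1 ≤ (y₂ / x₂) / (y₁ / x₁)) (hhi : (y₂ / x₂) / (y₁ / x₁) ≤ 1 + η) :
    Real.arccos ((x₁ * x₂ + y₁ * y₂) /
      (Real.sqrt (x₁ ^ 2 + y₁ ^ 2) * Real.sqrt (x₂ ^ 2 + y₂ ^ 2))) ≤ η := by
  have hs₁ : (0:ℝ) < y₁ / x₁ := div_pos hy₁ hx₁
  have hlo' : y₁ * x₂ ≤ x₁ * y₂ := by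
    have h := (one_le_div hs₁).mp hlo
    rw [div_le_div_iff₀ hx₁ hx₂] at h
    linarith
  have hhi' : x₁ * y₂ ≤ (1 + η) * (y₁ * x₂) := by
    have h := (div_le_iff₀ hs₁).mp hhi
    have h2 : y₂ / x₂ ≤ ((1 + η) * y₁) / x₁ := by rw [mul_div_assoc]; exact h
    rw [div_le_div_iff₀ hx₂ hx₁] at h2
    linarith
  have hη0 : 0 ≤ η := by
    by_contra h
    push_neg at h
    nlinarith [mul_pos hy₁ hx₂]
  have hdpos : (0:ℝ) < x₁ * x₂ + y₁ * y₂ := by positivity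
  have hc0 : (0:ℝ) ≤ x₁ * y₂ - y₁ * x₂ := by linarith
  have hamgm : 2 * (y₁ * x₂) ≤ x₁ * x₂ + y₁ * y₂ := by
    nlinarith [mul_nonneg (mul_pos hy₁ hx₂).le (sub_nonneg.2 hlo'),
      sq_nonneg (x₁ * x₂ - y₁ * x₂), sq_nonneg (y₁ * y₂ - y₁ * x₂)]
  have hkey : 2 * (x₁ * y₂ - y₁ * x₂) ≤ η * (x₁ * x₂ + y₁ * y₂) := by
    have h1 : x₁ * y₂ - y₁ * x₂ ≤ η * (y₁ * x₂) := by nlinarith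
    nlinarith [mul_le_mul_of_nonneg_left hamgm hη0]
  have hR₁pos : 0 < Real.sqrt (x₁ ^ 2 + y₁ ^ 2) := Real.sqrt_pos.2 (by positivity)
  have hR₂pos : 0 < Real.sqrt (x₂ ^ 2 + y₂ ^ 2) := Real.sqrt_pos.2 (by positivity)
  have hRsq : (Real.sqrt (x₁ ^ 2 + y₁ ^ 2) * Real.sqrt (x₂ ^ 2 + y₂ ^ 2)) ^ 2
      = (x₁ * x₂ + y₁ * y₂) ^ 2 + (x₁ * y₂ - y₁ * x₂) ^ 2 := by
    rw [mul_pow, Real.sq_sqrt (by positivity), Real.sq_sqrt (by positivity)]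
    ring
  have hcosle := cos_le_div (x₁ * x₂ + y₁ * y₂) (x₁ * y₂ - y₁ * x₂)
    (Real.sqrt (x₁ ^ 2 + y₁ ^ 2) * Real.sqrt (x₂ ^ 2 + y₂ ^ 2)) η
    hdpos hc0 (mul_pos hR₁pos hR₂pos) hRsq hη0 hη hkey
  calc Real.arccos ((x₁ * x₂ + y₁ * y₂) /
        (Real.sqrt (x₁ ^ 2 + y₁ ^ 2) * Real.sqrt (x₂ ^ 2 + y₂ ^ 2)))
      ≤ Real.arccos (Real.cos η) := arccos_antitone hcosle
    _ = η := Real.arccos_cos hη0 (hη.trans (by linarith [Real.pi_gt_three]))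
end

section
/- Let θ ∈ (0,1), and let Ω ⊆ [n−1] be a random subset including each index independently with probability θ. For w ∈ ℝ^{n−1} with ‖w‖ < 1 and a fixed unit vector v = w/‖w‖, define h(t) = (1−θ)·t·E_Ω‖v_Ω‖ + θ·E_Ω√(1 − t²‖v_{Ω^c}‖²) for t ∈ (0,1). Then h''(t) ≤ −θ(1−θ) for all t ∈ (0,1). -/
/-!
Each summand `√(1 - t²c)` of `h` has second derivative `-c / (1 - t²c)^{3/2} ≤ -c`
when `0 ≤ c`, and the linear part of `h` contributes nothing. So `h''(t) ≤ -θ · E_Ω c_Ω`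
with `c_Ω = ‖v_{Ω^c}‖²`, and `E_Ω c_Ω = (1 - θ) ‖v‖² = 1 - θ` because each index is
missed with probability `1 - θ`.
-/

open Finset Filter Topology

section Calculus

variable {c s : ℝ}

theorem hasDerivAt_sqrt_one_sub_sq_mul (hs : 0 < 1 - s ^ 2 * c) :
    HasDerivAt (fun x => √(1 - x ^ 2 * c)) (-(s * c) / √(1 - s ^ 2 * c)) s := by
  have hinner : HasDerivAt (fun x => 1 - x ^ 2 * c) (-(2 * s * c)) s :=
    (((hasDerivAt_pow 2 s).mul_const c).const_sub 1).congr_deriv (by ring)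
  refine ((Real.hasDerivAt_sqrt hs.ne').comp s hinner).congr_deriv ?_
  have : √(1 - s ^ 2 * c) ≠ 0 := (Real.sqrt_pos.mpr hs).ne'
  field_simp

theorem hasDerivAt_neg_mul_div_sqrt_one_sub_sq_mul (hs : 0 < 1 - s ^ 2 * c) :
    HasDerivAt (fun x => -(x * c) / √(1 - x ^ 2 * c))
      (-c / ((1 - s ^ 2 * c) * √(1 - s ^ 2 * c))) s := by
  have hroot : 0 < √(1 - s ^ 2 * c) := Real.sqrt_pos.mpr hs
  have hsq : √(1 - s ^ 2 * c) ^ 2 = 1 - s ^ 2 * c := Real.sq_sqrt hs.le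
  have hnum : HasDerivAt (fun x => -(x * c)) (-c) s :=
    ((hasDerivAt_id s).mul_const c).fun_neg.congr_deriv (by simp)
  refine (hnum.div (hasDerivAt_sqrt_one_sub_sq_mul hs) hroot.ne').congr_deriv ?_
  generalize √(1 - s ^ 2 * c) = r at hroot hsq ⊢
  rw [← hsq]
  field_simp
  linear_combination (-c) * hsq

theorem hasDerivAt_deriv_sqrt_one_sub_sq_mul (hs : 0 < 1 - s ^ 2 * c) :
    HasDerivAt (deriv fun x => √(1 - x ^ 2 * c))
      (-c / ((1 - s ^ 2 * c) * √(1 - s ^ 2 * c))) s := by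
  have hnear : ∀ᶠ x in 𝓝 s, 0 < 1 - x ^ 2 * c :=
    continuousAt_const.eventually_lt (by fun_prop) hs
  refine (hasDerivAt_neg_mul_div_sqrt_one_sub_sq_mul hs).congr_of_eventuallyEq ?_
  filter_upwards [hnear] with x hx
  exact (hasDerivAt_sqrt_one_sub_sq_mul hx).deriv

theorem deriv_deriv_linear_add_sum_sqrt_one_sub_sq_mul {ι : Type*} (S : Finset ι)
    (a b : ℝ) (p c : ι → ℝ) {t : ℝ} (ht : ∀ i ∈ S, 0 < 1 - t ^ 2 * c i) :
    deriv (deriv fun s => a * s + b * ∑ i ∈ S, p i * √(1 - s ^ 2 * c i)) t =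
      b * ∑ i ∈ S, p i * (-c i / ((1 - t ^ 2 * c i) * √(1 - t ^ 2 * c i))) := by
  have hnear : ∀ᶠ s in 𝓝 t, ∀ i ∈ S, 0 < 1 - s ^ 2 * c i :=
    (eventually_all_finset S).2 fun i hi =>
      continuousAt_const.eventually_lt (by fun_prop) (ht i hi)
  have hderiv : deriv (fun s => a * s + b * ∑ i ∈ S, p i * √(1 - s ^ 2 * c i)) =ᶠ[𝓝 t]
      fun s => a + b * ∑ i ∈ S, p i * deriv (fun x => √(1 - x ^ 2 * c i)) s := by
    filter_upwards [hnear] with s hs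
    refine HasDerivAt.deriv <| HasDerivAt.congr_deriv
      (((hasDerivAt_id s).const_mul a).fun_add <| .const_mul b <| .fun_sum fun i hi =>
        (hasDerivAt_sqrt_one_sub_sq_mul (hs i hi)).differentiableAt.hasDerivAt.const_mul (p i))
      (by simp)
  rw [hderiv.deriv_eq]
  exact HasDerivAt.deriv <| (HasDerivAt.const_mul b <| .fun_sum fun i hi =>
    (hasDerivAt_deriv_sqrt_one_sub_sq_mul (ht i hi)).const_mul (p i)).const_add a

theorem neg_div_mul_sqrt_le_neg {u : ℝ} (hc : 0 ≤ c) (hu₀ : 0 < u) (hu₁ : u ≤ 1) :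
    -c / (u * √u) ≤ -c := by
  have hprod : u * √u ≤ 1 :=
    mul_le_one₀ hu₁ (Real.sqrt_nonneg u) (Real.sqrt_le_one.mpr hu₁)
  rw [neg_div, neg_le_neg_iff, le_div_iff₀ (by positivity)]
  exact mul_le_of_le_one_right hc hprod

end Calculus

section BinomialSubsets

variable {ι : Type*} [DecidableEq ι]

theorem sum_powerset_filter_notMem_pow_mul_pow (θ : ℝ) {T : Finset ι} {i : ι} (hi : i ∈ T) :
    ∑ Ω ∈ T.powerset with i ∉ Ω, θ ^ #Ω * (1 - θ) ^ (#T - #Ω) = 1 - θ := by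
  have hfilter : {Ω ∈ T.powerset | i ∉ Ω} = (T.erase i).powerset := by
    ext Ω
    simp [subset_erase]
  have hcard : #T = #(T.erase i) + 1 := (card_erase_add_one hi).symm
  calc ∑ Ω ∈ T.powerset with i ∉ Ω, θ ^ #Ω * (1 - θ) ^ (#T - #Ω)
      = (1 - θ) * ∑ Ω ∈ (T.erase i).powerset, θ ^ #Ω * (1 - θ) ^ (#(T.erase i) - #Ω) := by
        rw [hfilter, mul_sum]
        refine sum_congr rfl fun Ω hΩ => ?_
        rw [hcard, Nat.sub_add_comm (card_le_card (mem_powerset.mp hΩ)), pow_succ]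
        ring
    _ = 1 - θ := by rw [sum_pow_mul_eq_add_pow, add_sub_cancel, one_pow, mul_one]

/-- If `Ω ⊆ T` contains each index independently with probability `θ`, the expected mass
of `a` on `T \ Ω` is `(1 - θ)` times its mass on `T`. -/
theorem sum_powerset_pow_mul_pow_mul_sum_sdiff (θ : ℝ) (T : Finset ι) (a : ι → ℝ) :
    ∑ Ω ∈ T.powerset, θ ^ #Ω * (1 - θ) ^ (#T - #Ω) * ∑ i ∈ T \ Ω, a i =
      (1 - θ) * ∑ i ∈ T, a i := by
  simp_rw [sdiff_eq_filter, sum_filter, mul_sum]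
  rw [sum_comm]
  refine sum_congr rfl fun i hi => ?_
  simp_rw [mul_ite, mul_zero, ← sum_filter, ← sum_mul,
    sum_powerset_filter_notMem_pow_mul_pow θ hi]

end BinomialSubsets

theorem sum_sq_div_sqrt_sum_sq {ι : Type*} [Fintype ι] {w : ι → ℝ} (hw : w ≠ 0) :
    ∑ i, (w i / √(∑ j, w j ^ 2)) ^ 2 = 1 := by
  have hpos : 0 < ∑ j, w j ^ 2 := by
    obtain ⟨i, hi⟩ := Function.ne_iff.mp hw
    exact sum_pos' (fun j _ => sq_nonneg (w j)) ⟨i, mem_univ i, pow_two_pos_of_ne_zero hi⟩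
  simp_rw [div_pow, Real.sq_sqrt hpos.le, ← sum_div]
  exact div_self hpos.ne'

theorem stmt11_general (m : ℕ) (θ : ℝ) (hθ : θ ∈ Set.Ioo (0 : ℝ) 1)
    (w : Fin m → ℝ) (hw : w ≠ 0)
    (v : Fin m → ℝ) (hv : v = fun i => w i / Real.sqrt (∑ j, w j ^ 2))
    (h : ℝ → ℝ)
    (hh : h = fun t =>
      (1 - θ) * t *
          (∑ Ω ∈ (Finset.univ : Finset (Fin m)).powerset,
            θ ^ Ω.card * (1 - θ) ^ (m - Ω.card) * Real.sqrt (∑ i ∈ Ω, v i ^ 2)) +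
      θ * ∑ Ω ∈ (Finset.univ : Finset (Fin m)).powerset,
            θ ^ Ω.card * (1 - θ) ^ (m - Ω.card) *
              Real.sqrt (1 - t ^ 2 * ∑ i ∈ Finset.univ \ Ω, v i ^ 2))
    (t : ℝ) (ht : t ∈ Set.Ioo (0 : ℝ) 1) :
    deriv (deriv h) t ≤ -(θ * (1 - θ)) := by
  obtain ⟨hθ₀, hθ₁⟩ := hθ
  obtain ⟨ht₀, ht₁⟩ := ht
  have hv1 : ∑ i, v i ^ 2 = 1 := hv ▸ sum_sq_div_sqrt_sum_sq hw
  set p : Finset (Fin m) → ℝ := fun Ω => θ ^ #Ω * (1 - θ) ^ (m - #Ω)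
  set c : Finset (Fin m) → ℝ := fun Ω => ∑ i ∈ univ \ Ω, v i ^ 2
  have hc₀ : ∀ Ω, 0 ≤ c Ω := fun Ω => sum_nonneg fun i _ => sq_nonneg (v i)
  have hc₁ : ∀ Ω, c Ω ≤ 1 := fun Ω =>
    hv1 ▸ sum_le_sum_of_subset_of_nonneg sdiff_subset fun i _ _ => sq_nonneg (v i)
  have hu : ∀ Ω, 0 < 1 - t ^ 2 * c Ω := fun Ω => by nlinarith [hc₀ Ω, hc₁ Ω]
  have hmean : ∑ Ω ∈ univ.powerset, p Ω * c Ω = 1 - θ := by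
    have := sum_powerset_pow_mul_pow_mul_sum_sdiff θ univ fun i => v i ^ 2
    rwa [card_univ, Fintype.card_fin, hv1, mul_one] at this
  have hform : h = fun s =>
      ((1 - θ) * ∑ Ω ∈ univ.powerset, p Ω * √(∑ i ∈ Ω, v i ^ 2)) * s +
      θ * ∑ Ω ∈ univ.powerset, p Ω * √(1 - s ^ 2 * c Ω) := by
    rw [hh]; ext s; simp only [p, c]; ring
  rw [hform, deriv_deriv_linear_add_sum_sqrt_one_sub_sq_mul _ _ θ p c fun Ω _ => hu Ω]
  calc θ * ∑ Ω ∈ univ.powerset, p Ω * (-c Ω / ((1 - t ^ 2 * c Ω) * √(1 - t ^ 2 * c Ω)))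
      ≤ θ * ∑ Ω ∈ univ.powerset, p Ω * -c Ω := by
        gcongr with Ω
        exact neg_div_mul_sqrt_le_neg (hc₀ Ω) (hu Ω) (by nlinarith [hc₀ Ω])
    _ = -(θ * (1 - θ)) := by simp only [mul_neg, sum_neg_distrib, hmean]

/-- Negative curvature of the population objective along radial directions:
    with Ω ⊆ [m] a random support (each index included independently with
    probability θ), v = w/‖w‖ for 0 ≠ w with ‖w‖ < 1, and
    h(t) = (1−θ)·t·E_Ω‖v_Ω‖ + θ·E_Ω√(1 − t²‖v_{Ω^c}‖²),
    one has h''(t) ≤ −θ(1−θ) for all t ∈ (0,1). -/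
theorem stmt11 (m : ℕ) (θ : ℝ) (hθ : θ ∈ Set.Ioo (0 : ℝ) 1)
    (w : Fin m → ℝ) (hw : w ≠ 0) (hw1 : Real.sqrt (∑ i, w i ^ 2) < 1)
    (v : Fin m → ℝ) (hv : v = fun i => w i / Real.sqrt (∑ j, w j ^ 2))
    (h : ℝ → ℝ)
    (hh : h = fun t =>
      (1 - θ) * t *
          (∑ Ω ∈ (Finset.univ : Finset (Fin m)).powerset,
            θ ^ Ω.card * (1 - θ) ^ (m - Ω.card) * Real.sqrt (∑ i ∈ Ω, v i ^ 2)) +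
      θ * ∑ Ω ∈ (Finset.univ : Finset (Fin m)).powerset,
            θ ^ Ω.card * (1 - θ) ^ (m - Ω.card) *
              Real.sqrt (1 - t ^ 2 * ∑ i ∈ Finset.univ \ Ω, v i ^ 2))
    (t : ℝ) (ht : t ∈ Set.Ioo (0 : ℝ) 1) :
    deriv (deriv h) t ≤ -(θ * (1 - θ)) :=
  stmt11_general m θ hθ w hw v hv h hh t ht
end
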